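/- Let f : X → Y be any map between finite sets. If H : ℝ^X → ℝ^X is infinitesimal stochastic, then f_* H f^* : ℝ^Y → ℝ^Y is infinitesimal stochastic. -/

import Mathlib

open scoped BigOperators

noncomputable section

/-- The pushforward of vectors along a map of finite sets:
`(f_* v) b = ∑_{a : f a = b} v a`. -/
def pushforward {A B : Type} [Fintype A] [DecidableEq B] (f : A → B) :
    (A → ℝ) →ₗ[ℝ] (B → ℝ) where
  toFun v := fun b => ∑ a ∈ Finset.univ.filter (fun a => f a = b), v a
  map_add' u v := by
    funext b
    simp [Finset.sum_add_distrib]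
  map_smul' c v := by
    funext b
    simp [Finset.mul_sum]

/-- The pullback of vectors along a map of finite sets: `f^* v = v ∘ f`. -/
def pullback {A B : Type} (f : A → B) : (B → ℝ) →ₗ[ℝ] (A → ℝ) where
  toFun v := v ∘ f
  map_add' _ _ := rfl
  map_smul' _ _ := rfl

/-- A probability distribution on a finite set: nonnegative components summing to 1. -/
def IsProbDist {A : Type} [Fintype A] (v : A → ℝ) : Prop :=
  (∀ a, 0 ≤ v a) ∧ ∑ a, v a = 1

/-- A linear operator is stochastic if it maps probability distributions to
probability distributions. -/
def IsStochasticOp {A B : Type} [Fintype A] [Fintype B]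
    (T : (A → ℝ) →ₗ[ℝ] (B → ℝ)) : Prop :=
  ∀ v, IsProbDist v → IsProbDist (T v)

/-- An operator `H` is infinitesimal stochastic if its off-diagonal matrix entries
`H_{ij} = (H e_j) i` are nonnegative and each column sums to zero. -/
def IsInfinitesimalStochastic {A : Type} [Fintype A] [DecidableEq A]
    (H : (A → ℝ) →ₗ[ℝ] (A → ℝ)) : Prop :=
  (∀ i j, i ≠ j → 0 ≤ H (Pi.single j 1) i) ∧ ∀ j, ∑ i, H (Pi.single j 1) i = 0

/-- A stochastic section for `p : X → X'` is a stochastic operator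
`s : ℝ^{X'} → ℝ^X` with `p_* ∘ s = 1`. -/
def IsStochasticSection {X X' : Type} [Fintype X] [Fintype X'] [DecidableEq X']
    (p : X → X') (s : (X' → ℝ) →ₗ[ℝ] (X → ℝ)) : Prop :=
  IsStochasticOp s ∧ pushforward p ∘ₗ s = LinearMap.id

/-- A matrix is stochastic if it maps probability distributions to probability
distributions. -/
def IsStochasticMat {A B : Type} [Fintype A] [Fintype B] (T : Matrix B A ℝ) : Prop :=
  ∀ v, IsProbDist v → IsProbDist (T.mulVec v)

/-- A matrix is infinitesimal stochastic if its off-diagonal entries are nonnegative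
and its columns sum to zero. -/
def IsInfStochMat {A : Type} [Fintype A] (H : Matrix A A ℝ) : Prop :=
  (∀ i j, i ≠ j → 0 ≤ H i j) ∧ ∀ j, ∑ i, H i j = 0

/-- A Markov semigroup: a continuous one-parameter semigroup of stochastic matrices. -/
def IsMarkovSemigroup {A : Type} [Fintype A] [DecidableEq A] (U : ℝ → Matrix A A ℝ) : Prop :=
  (∀ t : ℝ, 0 ≤ t → IsStochasticMat (U t)) ∧ U 0 = 1 ∧
    (∀ s t : ℝ, 0 ≤ s → 0 ≤ t → U (s + t) = U s * U t) ∧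
    ∀ v : A → ℝ, ContinuousOn (fun t => (U t).mulVec v) (Set.Ici 0)

/-- The (matrix of the) pushforward along `f`. -/
def pushMat {A B : Type} [DecidableEq B] (f : A → B) : Matrix B A ℝ :=
  Matrix.of fun b a => if f a = b then 1 else 0

/-- A commuting square of maps that is a pullback: every compatible pair has a
unique common preimage. -/
def IsPullbackSquare {A B C D : Type} (f : A → B) (g : A → C) (h : B → D) (k : C → D) : Prop :=
  (∀ a, h (f a) = k (g a)) ∧ ∀ (b : B) (c : C), h b = k c → ∃! a, f a = b ∧ g a = c

/-- A commuting square of maps satisfying the universal property of a pushout. -/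
def IsPushoutSquare {T X Y Z : Type} (o : T → X) (i' : T → Y) (j : X → Z) (k : Y → Z) : Prop :=
  (∀ t, j (o t) = k (i' t)) ∧
    ∀ (W : Type) (u : X → W) (u' : Y → W), (∀ t, u (o t) = u' (i' t)) →
      ∃! w : Z → W, (∀ x, w (j x) = u x) ∧ ∀ y, w (k y) = u' y

/-- The black-boxing of an open Markov process `S → (X,H) ← T`: the set of
steady-state boundary data `(i^* v, I, o^* v, O)`. -/
def blackBox {S X T : Type} [Fintype S] [Fintype T] [DecidableEq X]
    (i : S → X) (o : T → X) (H : (X → ℝ) →ₗ[ℝ] (X → ℝ)) :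
    Set ((S → ℝ) × (S → ℝ) × (T → ℝ) × (T → ℝ)) :=
  {w | ∃ (v : X → ℝ) (I : S → ℝ) (O : T → ℝ),
    H v + pushforward i I - pushforward o O = 0 ∧
    w = (pullback i v, I, pullback o v, O)}

/-- The direct sum of two operators, under the canonical identification
`ℝ^{X ⊕ Y} ≃ ℝ^X ⊕ ℝ^Y`. -/
def dsum {A B : Type} (H : (A → ℝ) →ₗ[ℝ] (A → ℝ)) (G : (B → ℝ) →ₗ[ℝ] (B → ℝ)) :
    (A ⊕ B → ℝ) →ₗ[ℝ] (A ⊕ B → ℝ) :=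
  (LinearEquiv.sumArrowLequivProdArrow A B ℝ ℝ).symm.toLinearMap ∘ₗ
    (H.prodMap G) ∘ₗ (LinearEquiv.sumArrowLequivProdArrow A B ℝ ℝ).toLinearMap

/-! The `(i, j)` entry of `f_* H f^*` is `∑ H_{a x}` over `a ∈ f⁻¹ i`, `x ∈ f⁻¹ j`; for `i ≠ j`
every such `H_{a x}` is off-diagonal, hence nonnegative. Column sums vanish because `f_*`
preserves total mass and `H` annihilates it. -/

section PushPull

variable {A B : Type}

theorem pushforward_apply [Fintype A] [DecidableEq B] (f : A → B) (v : A → ℝ) (b : B) :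
    pushforward f v b = ∑ a ∈ Finset.univ.filter (fun a => f a = b), v a :=
  rfl

theorem pullback_apply (f : A → B) (v : B → ℝ) (a : A) :
    pullback f v a = v (f a) :=
  rfl

theorem sum_pushforward [Fintype A] [Fintype B] [DecidableEq B] (f : A → B) (v : A → ℝ) :
    ∑ b, pushforward f v b = ∑ a, v a :=
  Finset.sum_fiberwise Finset.univ f v

theorem pullback_single [Fintype A] [DecidableEq A] [DecidableEq B] (f : A → B) (b : B) :
    pullback f (Pi.single b 1) = ∑ a ∈ Finset.univ.filter (fun a => f a = b), Pi.single a 1 := by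
  funext a
  simp only [pullback_apply, Finset.sum_apply, Pi.single_apply, Finset.sum_ite_eq,
    Finset.mem_filter, Finset.mem_univ, true_and]

end PushPull

section InfinitesimalStochastic

variable {A : Type} [Fintype A] [DecidableEq A] {H : (A → ℝ) →ₗ[ℝ] (A → ℝ)}

theorem IsInfinitesimalStochastic.sum_apply_eq_zero (hH : IsInfinitesimalStochastic H)
    (v : A → ℝ) : ∑ i, H v i = 0 := by
  conv_lhs => rw [pi_eq_sum_univ' v]
  simp only [map_sum, map_smul, Finset.sum_apply, Pi.smul_apply, smul_eq_mul]
  rw [Finset.sum_comm]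
  simp only [← Finset.mul_sum, hH.2, mul_zero, Finset.sum_const_zero]

theorem IsInfinitesimalStochastic.apply_sum_single_nonneg (hH : IsInfinitesimalStochastic H)
    {s : Finset A} {i : A} (hi : i ∉ s) : 0 ≤ H (∑ j ∈ s, Pi.single j 1) i := by
  rw [map_sum, Finset.sum_apply]
  exact Finset.sum_nonneg fun j hj => hH.1 i j (ne_of_mem_of_not_mem hj hi).symm

end InfinitesimalStochastic

/-- For any map `f : X → Y` of finite sets and infinitesimal stochastic
`H : ℝ^X → ℝ^X`, the operator `f_* H f^* : ℝ^Y → ℝ^Y` is infinitesimal stochastic. -/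
theorem push_pull_infStoch {X Y : Type} [Fintype X] [Fintype Y]
    [DecidableEq X] [DecidableEq Y]
    (f : X → Y) (H : (X → ℝ) →ₗ[ℝ] (X → ℝ)) (hH : IsInfinitesimalStochastic H) :
    IsInfinitesimalStochastic (pushforward f ∘ₗ H ∘ₗ pullback f) := by
  refine ⟨fun i j hij => ?_, fun j => ?_⟩
  · simp only [LinearMap.comp_apply, pullback_single, pushforward_apply]
    refine Finset.sum_nonneg fun a ha => hH.apply_sum_single_nonneg ?_
    simp only [Finset.mem_filter, Finset.mem_univ, true_and] at ha ⊢
    exact fun h => hij (ha.symm.trans h)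
  · simp only [LinearMap.comp_apply, sum_pushforward]
    exact hH.sum_apply_eq_zero _

end
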